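/- arXiv:1910.13194 — 3 statements merged into one kernel-verified Lean document; each statement's English description precedes it below -/
import Mathlib

section
/- Let T be a positive integer, K a nonempty finite index set, x : K → (Fin T → ℝ) a column family with x k t ∈ {0,1} for all k and t, and suppose the columns are pairwise distinct (x k ≠ x k' as functions whenever k ≠ k'). Let w : K → ℝ be a weight vector with w k ≥ 0 for all k and ∑_{k∈K} w k = 1, and define z t = ∑_{k∈K} w k · x k t. Then w k ∈ {0,1} for every k ∈ K if and only if z t ∈ {0,1} for every t. (Theorem 3 of the paper.) -/
/-- Theorem 3: for a fractional column-generation solution with pairwise distinct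
binary columns, the weights are all binary iff the aggregated vector `z` is binary. -/
theorem stmt_0
    (T : ℕ) (hT : 0 < T)
    (K : Type*) [Fintype K] [Nonempty K]
    (x : K → Fin T → ℝ)
    (hx : ∀ k t, x k t = 0 ∨ x k t = 1)
    (hdist : ∀ k k' : K, k ≠ k' → x k ≠ x k')
    (w : K → ℝ)
    (hw : ∀ k, 0 ≤ w k)
    (hsum : ∑ k, w k = 1)
    (z : Fin T → ℝ)
    (hz : ∀ t, z t = ∑ k, w k * x k t) :
    (∀ k, w k = 0 ∨ w k = 1) ↔ (∀ t, z t = 0 ∨ z t = 1) := by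
  classical
  constructor
  · intro hwbin t
    obtain ⟨k0, hk0⟩ : ∃ k, w k = 1 := by
      by_contra h
      push_neg at h
      have h0 : ∀ k, w k = 0 := fun k => (hwbin k).resolve_right (h k)
      simp [h0] at hsum
    have hothers : ∀ k, k ≠ k0 → w k = 0 := by
      intro k hk
      rcases hwbin k with h | h
      · exact h
      · exfalso
        have hsub : ({k, k0} : Finset K) ⊆ Finset.univ := Finset.subset_univ _
        have hle : ∑ j ∈ ({k, k0} : Finset K), w j ≤ ∑ j, w j :=
          Finset.sum_le_sum_of_subset_of_nonneg hsub (fun j _ _ => hw j)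
        rw [Finset.sum_pair hk, h, hk0, hsum] at hle
        linarith
    have : z t = w k0 * x k0 t := by
      rw [hz t]
      exact Finset.sum_eq_single k0 (fun b _ hb => by rw [hothers b hb]; ring)
        (fun h => absurd (Finset.mem_univ k0) h)
    rw [this, hk0, one_mul]
    exact hx k0 t
  · intro hzbin
    have key : ∀ k k', 0 < w k → 0 < w k' → x k = x k' := by
      intro k k' hk hk'
      funext t
      have hnn : ∀ j, 0 ≤ x j t := fun j => by rcases hx j t with h | h <;> simp [h]
      rcases hzbin t with h0 | h1
      · have hs : ∑ j, w j * x j t = 0 := by rw [← hz t, h0]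
        have hall := (Finset.sum_eq_zero_iff_of_nonneg
          (fun j _ => mul_nonneg (hw j) (hnn j))).mp hs
        have e1 : x k t = 0 := by
          have := hall k (Finset.mem_univ k)
          rcases mul_eq_zero.mp this with h | h
          · exact absurd h (ne_of_gt hk)
          · exact h
        have e2 : x k' t = 0 := by
          have := hall k' (Finset.mem_univ k')
          rcases mul_eq_zero.mp this with h | h
          · exact absurd h (ne_of_gt hk')
          · exact h
        rw [e1, e2]
      · have hs : ∑ j, w j * (1 - x j t) = 0 := by
          have : ∑ j, w j * (1 - x j t) = (∑ j, w j) - ∑ j, w j * x j t := by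
            rw [← Finset.sum_sub_distrib]; apply Finset.sum_congr rfl; intro j _; ring
          rw [this, hsum, ← hz t, h1, sub_self]
        have hle : ∀ j, x j t ≤ 1 := fun j => by rcases hx j t with h | h <;> simp [h]
        have hall := (Finset.sum_eq_zero_iff_of_nonneg
          (fun j _ => mul_nonneg (hw j) (by linarith [hle j]))).mp hs
        have e1 : x k t = 1 := by
          have := hall k (Finset.mem_univ k)
          rcases mul_eq_zero.mp this with h | h
          · exact absurd h (ne_of_gt hk)
          · linarith
        have e2 : x k' t = 1 := by
          have := hall k' (Finset.mem_univ k')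
          rcases mul_eq_zero.mp this with h | h
          · exact absurd h (ne_of_gt hk')
          · linarith
        rw [e1, e2]
    obtain ⟨k0, hk0⟩ : ∃ k, 0 < w k := by
      by_contra h
      push_neg at h
      have h0 : ∀ k, w k = 0 := fun k => le_antisymm (h k) (hw k)
      simp [h0] at hsum
    have huniq : ∀ k, 0 < w k → k = k0 := by
      intro k hk
      by_contra hne
      exact hdist k k0 hne (key k k0 hk hk0)
    have hzero : ∀ k, k ≠ k0 → w k = 0 := by
      intro k hk
      rcases eq_or_lt_of_le (hw k) with h | h
      · exact h.symm
      · exact absurd (huniq k h) hk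
    have hk01 : w k0 = 1 := by
      rw [← hsum]
      exact (Finset.sum_eq_single k0 (fun b _ hb => hzero b hb)
        (fun h => absurd (Finset.mem_univ k0) h)).symm
    intro k
    rcases eq_or_lt_of_le (hw k) with h | h
    · exact Or.inl h.symm
    · exact Or.inr (by rw [huniq k h, hk01])
end

section
/- Let N be a positive integer and n : Fin N → ℕ with n i ≥ 1 for all i, and let σ = ∑_{i} n i. Then the minimum, over all subsets A ⊆ Fin N satisfying the capacity condition 2·∑_{i∈A} n i ≤ σ, of the (doubled) caching cost 8σ − 2·∑_{i∈A} n i equals 7σ if and only if there exists a subset A ⊆ Fin N with 2·∑_{i∈A} n i = σ. (Correctness of the reduction from the Partition problem in the proof of Theorem 1: the constructed caching instance attains cost 7σ/2 exactly when the Partition instance is a yes-instance.) -/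
/-- Correctness of the reduction from Partition in the proof of Theorem 1: writing
`σ = ∑ i, n i`, the minimum over all capacity-feasible cached subsets `A`
(`2 * ∑ i in A, n i ≤ σ`) of the doubled caching cost `8σ − 2 * ∑ i in A, n i`
equals `7σ` iff some subset `A` satisfies `2 * ∑ i in A, n i = σ`. -/
theorem stmt_5
    (N : ℕ) (hN : 0 < N)
    (n : Fin N → ℕ)
    (hn : ∀ i, 1 ≤ n i) :
    sInf {c : ℕ | ∃ A : Finset (Fin N),
        2 * ∑ i ∈ A, n i ≤ ∑ i, n i ∧
        c = 8 * (∑ i, n i) - 2 * ∑ i ∈ A, n i}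
      = 7 * (∑ i, n i)
    ↔ ∃ A : Finset (Fin N), 2 * ∑ i ∈ A, n i = ∑ i, n i := by
  set S := {c : ℕ | ∃ A : Finset (Fin N),
      2 * ∑ i ∈ A, n i ≤ ∑ i, n i ∧
      c = 8 * (∑ i, n i) - 2 * ∑ i ∈ A, n i} with hS
  have hne : S.Nonempty := ⟨8 * (∑ i, n i) - 2 * ∑ i ∈ (∅ : Finset (Fin N)), n i,
    ∅, by simp, rfl⟩
  constructor
  · intro h
    have hmem : sInf S ∈ S := Nat.sInf_mem hne
    rw [h] at hmem
    obtain ⟨A, hle, heq⟩ := hmem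
    exact ⟨A, by omega⟩
  · rintro ⟨A, hA⟩
    apply le_antisymm
    · apply Nat.sInf_le
      exact ⟨A, le_of_eq hA, by omega⟩
    · apply le_csInf hne
      rintro c ⟨B, hle, rfl⟩
      omega
end

section
/- Fix a positive integer T, binary values x_t ∈ {0,1} for t = 1,…,T and binary values a_{t,i} ∈ {0,1} for t = 1,…,T and i = 0,…,t−1. Assume (i) ∑_{i=0}^{t−1} a_{t,i} = x_t for every t (constraint (9b)), and (ii) for every t ≥ 2 and every 1 ≤ i ≤ t−1, a_{t,i} = 1 implies a_{t−1,i−1} = 1 (the binary form of constraint (9d)). Then whenever a_{t,i} = 1, one has a_{t−j, i−j} = 1 and x_{t−j} = 1 for every 0 ≤ j ≤ i; i.e., a content whose AoI variable indicates age i at slot t has been continuously cached during slots t−i, …, t. -/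
/-- Continuity of caching along an AoI chain: under constraint (9b)
(`∑_{i=0}^{t-1} a_{t,i} = x_t`) and the binary form of constraint (9d)
(`a_{t,i} = 1 → a_{t-1,i-1} = 1`), if `a_{t,i} = 1` then `a_{t-j,i-j} = 1` and
`x_{t-j} = 1` for every `0 ≤ j ≤ i`: the content has been continuously cached
during slots `t-i, …, t`. -/
theorem stmt_7
    (T : ℕ) (hT : 0 < T)
    (x : ℕ → ℝ) (a : ℕ → ℕ → ℝ)
    (hxbin : ∀ t, 1 ≤ t → t ≤ T → x t = 0 ∨ x t = 1)
    (habin : ∀ t, 1 ≤ t → t ≤ T → ∀ i, i ≤ t - 1 → a t i = 0 ∨ a t i = 1)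
    (h9b : ∀ t, 1 ≤ t → t ≤ T → ∑ i ∈ Finset.range t, a t i = x t)
    (h9d : ∀ t, 2 ≤ t → t ≤ T → ∀ i, 1 ≤ i → i ≤ t - 1 →
      a t i = 1 → a (t - 1) (i - 1) = 1) :
    ∀ t, 1 ≤ t → t ≤ T → ∀ i, i ≤ t - 1 → a t i = 1 →
      ∀ j, j ≤ i → a (t - j) (i - j) = 1 ∧ x (t - j) = 1 := by
  -- helper: if a t i = 1 with valid indices, then x t = 1
  have hx1 : ∀ t, 1 ≤ t → t ≤ T → ∀ i, i ≤ t - 1 → a t i = 1 → x t = 1 := by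
    intro t ht1 htT i hi ha
    have hsum := h9b t ht1 htT
    have hmem : i ∈ Finset.range t := by
      exact Finset.mem_range.mpr (lt_of_le_of_lt hi (Nat.sub_lt ht1 one_pos))
    have hge : (1 : ℝ) ≤ x t := by
      rw [← hsum, ← ha]
      exact Finset.single_le_sum (fun k hk => by
        rcases habin t ht1 htT k (Nat.le_sub_one_of_lt (Finset.mem_range.mp hk)) with h | h
        · simp [h]
        · simp [h]) hmem
    rcases hxbin t ht1 htT with h | h
    · rw [h] at hge; linarith
    · exact h
  intro t ht1 htT i hi ha j
  induction j with
  | zero => intro _; simp only [Nat.sub_zero]; exact ⟨ha, hx1 t ht1 htT i hi ha⟩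
  | succ j ih =>
    intro hji
    have hj : j ≤ i := Nat.le_of_succ_le hji
    obtain ⟨haj, _⟩ := ih hj
    have hjle : j < i := hji
    have hti : i < t := lt_of_le_of_lt hi (Nat.sub_lt ht1 one_pos)
    have ht2 : 2 ≤ t - j := by omega
    have htjT : t - j ≤ T := le_trans (Nat.sub_le _ _) htT
    have hij1 : 1 ≤ i - j := by omega
    have hij2 : i - j ≤ (t - j) - 1 := by omega
    have := h9d (t - j) ht2 htjT (i - j) hij1 hij2 haj
    have heq1 : t - j - 1 = t - (j + 1) := by omega
    have heq2 : i - j - 1 = i - (j + 1) := by omega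
    rw [heq1, heq2] at this
    refine ⟨this, hx1 (t - (j+1)) (by omega) (by omega) (i - (j+1)) (by omega) this⟩
end
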